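/- Let d ≥ 2 be an integer. If there exist coprime polynomials p, q ∈ ℚ[x], q ≠ 0, with ‖g_d − p/q‖ ≤ −2‖q‖ − d (i.e., g_d has a convergent whose rate of approximation is at least d, equivalently a partial quotient of degree at least d), then g_d is well approximable. -/

import Mathlib

open Polynomial

noncomputable section

/-- The coefficient of `x^{-n}` in the generalized Thue–Morse series `f_d`:
`(-1)^s` if every base-`d` digit of `n` is `0` or `1` and exactly `s` digits equal `1`,
and `0` otherwise. -/
def tmCoeff (d n : ℕ) : ℚ :=
  if (Nat.digits d n).all (· ≤ 1) then (-1 : ℚ) ^ (Nat.digits d n).sum else 0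

/-- We represent the field `ℚ((x⁻¹))` of formal Laurent series in `x⁻¹` as
`LaurentSeries ℚ` in the variable `y = x⁻¹`; the coefficient of `y^n` is the
coefficient of `x^{-n}`.  `fd d` is the generalized Thue–Morse function `f_d`. -/
def fd (d : ℕ) : LaurentSeries ℚ :=
  HahnSeries.ofPowerSeries ℤ ℚ (PowerSeries.mk fun n => tmCoeff d n)

/-- The element `x` of `ℚ((x⁻¹))`, i.e. `y⁻¹`. -/
def xL : LaurentSeries ℚ := HahnSeries.single (-1 : ℤ) 1

/-- Substitution `x ↦ x^d` on `ℚ((x⁻¹))` (i.e. `y ↦ y^d`). -/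
def substPow (d : ℕ) (u : LaurentSeries ℚ) : LaurentSeries ℚ :=
  if h : 0 < d then
    HahnSeries.embDomain
      (OrderEmbedding.ofStrictMono (fun n : ℤ => (d : ℤ) * n)
        (fun a b hab => mul_lt_mul_of_pos_left hab (by exact_mod_cast h))) u
  else 0

/-- The degree `‖u‖` of a Laurent series `u ∈ ℚ((x⁻¹))`: the largest exponent of `x`
with nonzero coefficient, i.e. minus the order in `y = x⁻¹`. -/
def ldeg (u : LaurentSeries ℚ) : ℤ := -u.order

/-- The embedding of `ℚ[x]` into `ℚ((x⁻¹))`, sending the polynomial variable to `x`. -/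
def polyToLS (p : ℚ[X]) : LaurentSeries ℚ := Polynomial.aeval xL p

/-- `u ∈ ℚ((x⁻¹))` is well approximable if for every integer `C` there are polynomials
`p, q`, `q ≠ 0`, with `‖u - p/q‖ < -2‖q‖ - C`. -/
def wellApprox (u : LaurentSeries ℚ) : Prop :=
  ∀ C : ℤ, ∃ p q : ℚ[X], q ≠ 0 ∧
    ldeg (u - polyToLS p / polyToLS q) < -2 * (q.natDegree : ℤ) - C

/-- `g_d(x) = x^{-d+1} f_d(x)`. -/
def gd (d : ℕ) : LaurentSeries ℚ := HahnSeries.single ((d : ℤ) - 1) 1 * fd d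

/-- `h_d(x) = x^{-1} f_d(x)`. -/
def hd (d : ℕ) : LaurentSeries ℚ := HahnSeries.single (1 : ℤ) 1 * fd d

/-- `u_d(x) = (1 - x^{-1}) f_d(x)`. -/
def ud (d : ℕ) : LaurentSeries ℚ := (1 - HahnSeries.single (1 : ℤ) 1) * fd d

/-- The polynomial `1 + x + ⋯ + x^{d-1}`. -/
def sumPow (d : ℕ) : ℚ[X] := ∑ i ∈ Finset.range d, X ^ i

/-- The real number `f_d(a) = ∏_{t=0}^∞ (1 - a^{-d^t})`. -/
def fdReal (a d : ℕ) : ℝ := ∏' t : ℕ, (1 - (a : ℝ) ^ (-(d ^ t : ℤ)))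

/-- A real number `ξ` is badly approximable if there is `c > 0` with
`|ξ - P/Q| ≥ c/Q²` for all integers `P, Q` with `Q ≥ 1`. -/
def badApproxReal (ξ : ℝ) : Prop :=
  ∃ c : ℝ, 0 < c ∧ ∀ P Q : ℤ, 1 ≤ Q → c / (Q : ℝ) ^ 2 ≤ |ξ - (P : ℝ) / Q|

/-!
Because `f_d(x) = (1 - x⁻¹) f_d(x^d)`, the series `g_d` satisfies
`g_d(x) = x^{d(d-2)} (x - 1) g_d(x^d)`. Substituting `x ↦ x^d` into an approximation `p/q`
and multiplying by `x^{d(d-2)} (x - 1)` therefore gives an approximation of `g_d` with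
denominator `q(x^d)` whose error is `x^{d(d-2)} (x - 1)` times the old error at `x^d`.
An approximation of rate `r` (that is, `‖g_d - p/q‖ ≤ -2‖q‖ - r`) becomes one of rate
`d r - (d - 1)^2`, which exceeds `r` as soon as `r ≥ d`; iterating makes the rate unbounded.
-/

namespace LaurentSeries

variable {R : Type*} [Semiring R]

def expand (d : ℕ) (hd : 0 < d) : LaurentSeries R →+* LaurentSeries R :=
  HahnSeries.embDomainRingHom (AddMonoidHom.mulLeft (d : ℤ))
    (fun _ _ h => mul_left_cancel₀ (by omega) h)
    (fun _ _ => mul_le_mul_iff_of_pos_left (by omega))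

variable {d : ℕ} {hd : 0 < d}

theorem coeff_expand_mul (u : LaurentSeries R) (n : ℤ) :
    (expand d hd u).coeff (d * n) = u.coeff n :=
  HahnSeries.embDomain_coeff (a := n)

theorem coeff_expand_of_not_dvd (u : LaurentSeries R) {n : ℤ} (hn : ¬ (d : ℤ) ∣ n) :
    (expand d hd u).coeff n = 0 :=
  HahnSeries.embDomain_of_notMem_range fun ⟨m, hm⟩ => hn ⟨m, hm.symm⟩

theorem coeff_expand_add_mul (u : LaurentSeries R) {r : ℤ} (hr0 : 0 ≤ r) (hrd : r < d)
    (m : ℤ) :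
    (expand d hd u).coeff (r + d * m) = if r = 0 then u.coeff m else 0 := by
  split_ifs with hr
  · rw [hr, zero_add, coeff_expand_mul]
  · refine coeff_expand_of_not_dvd u fun hdvd => hr ?_
    exact Int.eq_zero_of_dvd_of_nonneg_of_lt hr0 hrd
      ((Int.dvd_add_left (dvd_mul_right _ _)).mp hdvd)

theorem expand_single (a : ℤ) (r : R) :
    expand d hd (HahnSeries.single a r) = HahnSeries.single (d * a) r :=
  HahnSeries.embDomain_single

theorem expand_injective : Function.Injective (expand (R := R) d hd) :=
  HahnSeries.embDomain_injective

theorem order_expand (u : LaurentSeries R) : (expand d hd u).order = d * u.order := by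
  rcases eq_or_ne u 0 with rfl | hu
  · simp
  have hu' : expand d hd u ≠ 0 := (map_ne_zero_iff _ expand_injective).mpr hu
  apply WithTop.coe_injective
  rw [HahnSeries.order_eq_orderTop_of_ne_zero hu']
  exact HahnSeries.orderTop_embDomain.trans
    (by rw [← HahnSeries.order_eq_orderTop_of_ne_zero hu]; rfl)

end LaurentSeries

theorem ne_zero_of_ldeg_neg {u : LaurentSeries ℚ} (hu : ldeg u < 0) : u ≠ 0 := by
  rintro rfl
  simp [ldeg] at hu

theorem ldeg_mul {u v : LaurentSeries ℚ} (hu : u ≠ 0) (hv : v ≠ 0) :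
    ldeg (u * v) = ldeg u + ldeg v := by
  rw [ldeg, ldeg, ldeg, HahnSeries.order_mul hu hv]
  ring

theorem ldeg_expand {d : ℕ} (hd : 0 < d) (u : LaurentSeries ℚ) :
    ldeg (LaurentSeries.expand d hd u) = d * ldeg u := by
  rw [ldeg, ldeg, LaurentSeries.order_expand]
  ring

theorem polyToLS_mul (p q : ℚ[X]) : polyToLS (p * q) = polyToLS p * polyToLS q :=
  map_mul _ p q

theorem polyToLS_monomial (n : ℕ) (a : ℚ) :
    polyToLS (monomial n a) = HahnSeries.single (-n : ℤ) a := by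
  have hC : algebraMap ℚ (LaurentSeries ℚ) a = HahnSeries.C a := by simp
  rw [polyToLS, aeval_monomial, hC, HahnSeries.C_apply, xL, HahnSeries.single_pow,
    HahnSeries.single_mul_single]
  simp

theorem coeff_polyToLS (q : ℚ[X]) (m : ℤ) :
    (polyToLS q).coeff m = if m ≤ 0 then q.coeff m.natAbs else 0 := by
  induction q using Polynomial.induction_on' with
  | add p r hp hr =>
    rw [polyToLS, map_add, HahnSeries.coeff_add, ← polyToLS, ← polyToLS, hp, hr]
    split_ifs <;> simp
  | monomial n a =>
    rw [polyToLS_monomial, HahnSeries.coeff_single, coeff_monomial]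
    split_ifs <;> first | rfl | (exfalso; omega)

theorem coeff_polyToLS_neg_natDegree (q : ℚ[X]) :
    (polyToLS q).coeff (-q.natDegree) = q.leadingCoeff := by
  rw [coeff_polyToLS, if_pos (by omega), Int.natAbs_neg, Int.natAbs_natCast, leadingCoeff]

theorem polyToLS_ne_zero {q : ℚ[X]} (hq : q ≠ 0) : polyToLS q ≠ 0 :=
  HahnSeries.ne_zero_of_coeff_ne_zero
    ((coeff_polyToLS_neg_natDegree q).trans_ne (leadingCoeff_ne_zero.mpr hq))

theorem ldeg_polyToLS {q : ℚ[X]} (hq : q ≠ 0) : ldeg (polyToLS q) = q.natDegree := by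
  have hlead : (polyToLS q).coeff (-q.natDegree) ≠ 0 := by
    rw [coeff_polyToLS_neg_natDegree]
    exact leadingCoeff_ne_zero.mpr hq
  have hge : -(q.natDegree : ℤ) ≤ (polyToLS q).order := by
    by_contra hlt
    apply mt HahnSeries.coeff_order_eq_zero.mp (polyToLS_ne_zero hq)
    rw [coeff_polyToLS, if_pos (by omega)]
    exact coeff_eq_zero_of_natDegree_lt (by omega)
  have hle := HahnSeries.order_le_of_coeff_ne_zero hlead
  rw [ldeg]
  omega

theorem polyToLS_expand {d : ℕ} (hd : 0 < d) (P : ℚ[X]) :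
    polyToLS (Polynomial.expand ℚ d P) = LaurentSeries.expand d hd (polyToLS P) := by
  rw [polyToLS, polyToLS, expand_aeval, ← RingHom.toRatAlgHom_apply, ← aeval_algHom_apply,
    RingHom.toRatAlgHom_apply, xL, LaurentSeries.expand_single, HahnSeries.single_pow]
  simp

theorem tmCoeff_add_mul {d r : ℕ} (hd : 2 ≤ d) (hr : r < d) (m : ℕ) :
    tmCoeff d (r + d * m) =
      if r = 0 then tmCoeff d m else if r = 1 then -tmCoeff d m else 0 := by
  by_cases h0 : r = 0 ∧ m = 0
  · obtain ⟨rfl, rfl⟩ := h0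
    simp
  rw [tmCoeff, tmCoeff, Nat.digits_add d (by omega) r m hr (by tauto)]
  simp only [List.all_cons, List.sum_cons, pow_add]
  split_ifs <;> simp_all
  omega

theorem coeff_fd_natCast (d n : ℕ) : (fd d).coeff n = tmCoeff d n := by
  rw [fd, LaurentSeries.coeff_coe_powerSeries, PowerSeries.coeff_mk]

theorem coeff_fd_of_neg (d : ℕ) {n : ℤ} (hn : n < 0) : (fd d).coeff n = 0 := by
  rw [fd, PowerSeries.coeff_coe, if_pos hn]

theorem coeff_fd_add_mul {d : ℕ} (hd : 2 ≤ d) {r : ℤ} (hr0 : 0 ≤ r) (hrd : r < d)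
    (m : ℤ) :
    (fd d).coeff (r + d * m) =
      if r = 0 then (fd d).coeff m else if r = 1 then -(fd d).coeff m else 0 := by
  rcases lt_or_ge m 0 with hm | hm
  · rw [coeff_fd_of_neg d (by nlinarith), coeff_fd_of_neg d hm]
    simp
  · lift r to ℕ using hr0
    lift m to ℕ using hm
    rw [show (r : ℤ) + d * m = ((r + d * m : ℕ) : ℤ) by push_cast; rfl, coeff_fd_natCast,
      coeff_fd_natCast, tmCoeff_add_mul hd (by omega) m]
    simp only [Nat.cast_eq_zero, Nat.cast_eq_one]

theorem fd_eq {d : ℕ} (hd : 2 ≤ d) :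
    fd d = (1 - HahnSeries.single 1 1) * LaurentSeries.expand d (by omega) (fd d) := by
  ext n
  obtain ⟨r, m, hr0, hrd, rfl⟩ : ∃ r m : ℤ, 0 ≤ r ∧ r < d ∧ n = r + d * m :=
    ⟨n % d, n / d, Int.emod_nonneg _ (by omega), Int.emod_lt_of_pos _ (by omega),
      (Int.emod_add_mul_ediv n d).symm⟩
  have hprev : (LaurentSeries.expand d (by omega) (fd d)).coeff (r + d * m - 1) =
      if r = 1 then (fd d).coeff m else 0 := by
    rcases eq_or_ne r 0 with rfl | hr
    · rw [show (0 : ℤ) + d * m - 1 = (d - 1) + d * (m - 1) by ring,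
        LaurentSeries.coeff_expand_add_mul _ (by omega) (by omega), if_neg (by omega),
        if_neg (by omega)]
    · rw [show r + d * m - 1 = (r - 1) + d * m by ring,
        LaurentSeries.coeff_expand_add_mul _ (by omega) (by omega)]
      simp only [sub_eq_zero]
  rw [sub_mul, one_mul, HahnSeries.coeff_sub, HahnSeries.coeff_single_mul, one_mul, hprev,
    LaurentSeries.coeff_expand_add_mul _ hr0 hrd, coeff_fd_add_mul hd hr0 hrd]
  split_ifs <;> first | (exfalso; omega) | simp

theorem gd_eq {d : ℕ} (hd : 2 ≤ d) :
    gd d = polyToLS (X ^ (d * (d - 2)) * (X - 1)) * LaurentSeries.expand d (by omega) (gd d) := by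
  have hfactor : polyToLS (X ^ (d * (d - 2)) * (X - 1)) * HahnSeries.single (d * (d - 1 : ℤ)) 1 =
      HahnSeries.single ((d : ℤ) - 1) 1 * (1 - HahnSeries.single 1 1) := by
    simp only [polyToLS, map_mul, map_pow, map_sub, aeval_X, xL, HahnSeries.single_pow, sub_mul,
      mul_sub, mul_one, HahnSeries.single_mul_single, one_pow]
    congr 3 <;> · rw [nsmul_eq_mul]; push_cast [Nat.cast_sub hd]; ring
  rw [gd, map_mul, LaurentSeries.expand_single, ← mul_assoc, hfactor, mul_assoc, ← fd_eq hd]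

theorem gd_sub_div_expand {d : ℕ} (hd : 2 ≤ d) (P Q : ℚ[X]) :
    gd d - polyToLS (X ^ (d * (d - 2)) * (X - 1) * expand ℚ d P) / polyToLS (expand ℚ d Q) =
      polyToLS (X ^ (d * (d - 2)) * (X - 1)) *
        LaurentSeries.expand d (by omega) (gd d - polyToLS P / polyToLS Q) := by
  conv_lhs => rw [gd_eq hd]
  rw [map_sub, map_div₀, ← polyToLS_expand, ← polyToLS_expand]
  simp only [polyToLS_mul]
  ring

theorem exists_better_approx {d : ℕ} (hd : 2 ≤ d) {P Q : ℚ[X]} (hQ : Q ≠ 0) {r : ℤ}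
    (hr : d ≤ r) (h : ldeg (gd d - polyToLS P / polyToLS Q) ≤ -2 * Q.natDegree - r) :
    ∃ P' Q' : ℚ[X], Q' ≠ 0 ∧
      ldeg (gd d - polyToLS P' / polyToLS Q') ≤ -2 * Q'.natDegree - (r + 1) := by
  have hd0 : 0 < d := by omega
  have hS : (X ^ (d * (d - 2)) * (X - 1) : ℚ[X]) ≠ 0 :=
    mul_ne_zero (pow_ne_zero _ X_ne_zero) (X_sub_C_ne_zero 1)
  have hSdeg : (X ^ (d * (d - 2)) * (X - 1) : ℚ[X]).natDegree = d * (d - 2) + 1 := by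
    compute_degree!
  have he : gd d - polyToLS P / polyToLS Q ≠ 0 := ne_zero_of_ldeg_neg (by omega)
  have he' : LaurentSeries.expand d hd0 (gd d - polyToLS P / polyToLS Q) ≠ 0 :=
    (map_ne_zero_iff _ LaurentSeries.expand_injective).mpr he
  refine ⟨X ^ (d * (d - 2)) * (X - 1) * expand ℚ d P, expand ℚ d Q,
    (expand_ne_zero hd0).mpr hQ, ?_⟩
  rw [gd_sub_div_expand hd, ldeg_mul (polyToLS_ne_zero hS) he', ldeg_polyToLS hS, ldeg_expand,
    hSdeg, natDegree_expand]
  push_cast [Nat.cast_sub hd]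
  nlinarith

theorem wellApprox_of_large_rate_general (d : ℕ) (hd2 : 2 ≤ d) (p q : ℚ[X])
    (hq : q ≠ 0)
    (h : ldeg (gd d - polyToLS p / polyToLS q) ≤ -2 * (q.natDegree : ℤ) - (d : ℤ)) :
    wellApprox (gd d) := by
  have approx : ∀ n : ℕ, ∃ P Q : ℚ[X], Q ≠ 0 ∧
      ldeg (gd d - polyToLS P / polyToLS Q) ≤ -2 * (Q.natDegree : ℤ) - (d + n) := by
    intro n
    induction n with
    | zero => exact ⟨p, q, hq, by simpa using h⟩
    | succ n ih =>
      obtain ⟨P, Q, hQ, hPQ⟩ := ih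
      simpa [add_assoc] using exists_better_approx hd2 hQ (by omega) hPQ
  intro C
  obtain ⟨P, Q, hQ, hPQ⟩ := approx (C + 1 - d).toNat
  exact ⟨P, Q, hQ, by omega⟩

/-- Lemma 4: if `g_d` has a convergent with rate of approximation at least `d`,
then `g_d` is well approximable. -/
theorem wellApprox_of_large_rate (d : ℕ) (hd2 : 2 ≤ d) (p q : ℚ[X])
    (hpq : IsCoprime p q) (hq : q ≠ 0)
    (h : ldeg (gd d - polyToLS p / polyToLS q) ≤ -2 * (q.natDegree : ℤ) - (d : ℤ)) :
    wellApprox (gd d) :=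
  wellApprox_of_large_rate_general d hd2 p q hq h
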